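/- Let $A, B, C$ be finite subsets of $\mathbb{Z}^5$ and define the cross term $\chi(A,B) = \sum_{x \in A}\sum_{y \in B} \mathbb{P}^x(\tau_A = \infty)\, G_D(x-y)\, \mathbb{P}^y(\tau_B = \infty)$. Then $0 \le \chi(A,C) + \chi(B,C) - \chi(A\cup B, C)$, and moreover there is a universal constant $C_0$ such that $\chi(A,C) + \chi(B,C) - \chi(A\cup B, C) \le C_0\big(\sum_{x\in A}\sum_{y\in B}\sum_{z\in C} G_D(x-y)G_D(y-z) + \sum_{x\in A}\sum_{y\in B}\sum_{z\in C} G_D(x-y)G_D(x-z)\big)$. -/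

import Mathlib

open MeasureTheory ProbabilityTheory Filter Finset
open scoped ENNReal

noncomputable section

abbrev Zd (d : ℕ) := Fin d → ℤ

/-- The set of unit steps of the simple random walk on `ℤ^d`. -/
def stepSetD (d : ℕ) : Finset (Zd d) :=
  Finset.image
    (fun p : Fin d × Bool => fun j => if j = p.1 then (if p.2 then (1:ℤ) else -1) else 0)
    Finset.univ

/-- `ℙ^x(τ_A = ∞)`: the walk started at `x` (with increments `X`) never hits `A`
at a positive time. -/
def escProb {Ω : Type*} [MeasurableSpace Ω] (μ : Measure Ω) {d : ℕ}
    (X : ℕ → Ω → Zd d) (A : Finset (Zd d)) (x : Zd d) : ℝ :=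
  (μ {ω | ∀ n, 1 ≤ n → x + ∑ k ∈ Finset.range n, X k ω ∉ A}).toReal

/-- `ℙ^x(τ_A < ∞)`: the walk started at `x` hits `A` at some positive time. -/
def hitProb {Ω : Type*} [MeasurableSpace Ω] (μ : Measure Ω) {d : ℕ}
    (X : ℕ → Ω → Zd d) (A : Finset (Zd d)) (x : Zd d) : ℝ :=
  (μ {ω | ∃ n, 1 ≤ n ∧ x + ∑ k ∈ Finset.range n, X k ω ∈ A}).toReal

/-- The discrete Green's function `G_D(v) = ∑_{n ≥ 0} ℙ^0(S_n = v)`. -/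
def greenFn {Ω : Type*} [MeasurableSpace Ω] (μ : Measure Ω) {d : ℕ}
    (X : ℕ → Ω → Zd d) (v : Zd d) : ℝ :=
  (∑' n : ℕ, μ {ω | (∑ k ∈ Finset.range n, X k ω) = v}).toReal

/-- The cross term `χ(A,B)`. -/
def crossTerm {Ω : Type*} [MeasurableSpace Ω] (μ : Measure Ω)
    (X : ℕ → Ω → Zd 5) (A B : Finset (Zd 5)) : ℝ :=
  ∑ x ∈ A, ∑ y ∈ B,
    escProb μ X A x * greenFn μ X (x - y) * escProb μ X B y

/-- The Newtonian capacity `cap(A)`. -/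
def capa {Ω : Type*} [MeasurableSpace Ω] (μ : Measure Ω)
    (X : ℕ → Ω → Zd 5) (A : Finset (Zd 5)) : ℝ :=
  ∑ x ∈ A, escProb μ X A x

/-!
Write `φ(w) = ∑_{z ∈ C} G(w - z) e_C(z)`, so that `χ(A, C) = ∑_{x ∈ A} e_A(x) φ(x)` and
`0 ≤ φ(w) ≤ ∑_{z ∈ C} G(w - z)`. Splitting `A ∪ B` into `A` and `B \ A`, the defect
`χ(A, C) + χ(B, C) - χ(A ∪ B, C)` is the sum of `(e_A - e_{A ∪ B}) φ` over `A`, of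
`(e_B - e_{A ∪ B}) φ` over `B \ A` and of `e_B φ` over `A ∩ B`. Escape probabilities decrease as
the set grows, which gives nonnegativity. For the upper bound (with `C₀ = 1`),
`e_A(x) - e_{A ∪ B}(x) ≤ ℙ^x(τ_B < ∞) ≤ ∑_{y ∈ B} G(y - x)` by a union bound over times, `G` is
symmetric, and `e_B ≤ 1 ≤ G(0)`.

All of this needs `G` to be finite. In dimension `d ≥ 5` the function `x ↦ (|x - v|² + 1)⁻¹` is
superharmonic for the simple random walk and even drops by `1/2` under one step from `v`; since it
is at most `1`, the expected number of visits to `v` is at most `2`.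
-/

def walk {Ω : Type*} {d : ℕ} (X : ℕ → Ω → Zd d) (n : ℕ) (ω : Ω) : Zd d :=
  ∑ k ∈ range n, X k ω

def expectedVisits {Ω : Type*} [MeasurableSpace Ω] (μ : Measure Ω) {d : ℕ}
    (X : ℕ → Ω → Zd d) (v : Zd d) : ℝ≥0∞ :=
  ∑' n, μ {ω | walk X n ω = v}

section Walk

variable {Ω : Type*} {d : ℕ} {X : ℕ → Ω → Zd d}

lemma walk_zero (ω : Ω) : walk X 0 ω = 0 := rfl

lemma walk_succ (n : ℕ) (ω : Ω) : walk X (n + 1) ω = walk X n ω + X n ω :=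
  sum_range_succ _ _

variable [MeasurableSpace Ω] {μ : Measure Ω}

lemma measurable_walk (hmeas : ∀ n, Measurable (X n)) (n : ℕ) : Measurable (walk X n) :=
  Finset.measurable_sum _ fun k _ => hmeas k

variable {p : Zd d → ℝ≥0∞}

lemma measure_walk_succ (hmeas : ∀ n, Measurable (X n)) (hindep : iIndepFun X μ)
    (hlaw : ∀ n v, μ {ω | X n ω = v} = p v) (n : ℕ) (v : Zd d) :
    μ {ω | walk X (n + 1) ω = v} = ∑' s, μ {ω | walk X n ω = v - s} * p s := by
  have hind : IndepFun (walk X n) (X n) μ := by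
    convert hindep.indepFun_sum_range_succ hmeas n using 1
    exact funext fun ω => (sum_apply ω _ _).symm
  have hset : {ω | walk X (n + 1) ω = v} = ⋃ s, walk X n ⁻¹' {v - s} ∩ X n ⁻¹' {s} := by
    ext ω
    simp only [walk_succ, Set.mem_ofPred_eq, Set.mem_iUnion, Set.mem_inter_iff,
      Set.mem_preimage, Set.mem_singleton_iff, eq_sub_iff_add_eq]
    exact ⟨fun h => ⟨X n ω, h, rfl⟩, fun ⟨s, h, hs⟩ => hs ▸ h⟩
  rw [hset, measure_iUnion]
  · refine tsum_congr fun s => ?_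
    rw [hind.measure_inter_preimage_eq_mul _ _ (measurableSet_singleton _)
      (measurableSet_singleton _), ← hlaw n s]
    rfl
  · intro s t hst
    exact Set.disjoint_left.2 fun ω hs ht => hst (hs.2.symm.trans ht.2)
  · exact fun s => (measurable_walk hmeas n (measurableSet_singleton _)).inter
      (hmeas n (measurableSet_singleton _))

lemma measure_walk_neg (hmeas : ∀ n, Measurable (X n)) (hindep : iIndepFun X μ)
    (hlaw : ∀ n v, μ {ω | X n ω = v} = p v) (hsymm : ∀ s, p (-s) = p s) (n : ℕ) (v : Zd d) :
    μ {ω | walk X n ω = -v} = μ {ω | walk X n ω = v} := by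
  induction n generalizing v with
  | zero => simp only [walk_zero, eq_comm (a := (0 : Zd d)), neg_eq_zero]
  | succ n ih =>
    rw [measure_walk_succ hmeas hindep hlaw, measure_walk_succ hmeas hindep hlaw,
      ← (Equiv.neg (Zd d)).tsum_eq]
    refine tsum_congr fun s => ?_
    rw [Equiv.neg_apply, hsymm, show -v - -s = -(v - s) by abel, ih]

lemma greenFn_neg (hmeas : ∀ n, Measurable (X n)) (hindep : iIndepFun X μ)
    (hlaw : ∀ n v, μ {ω | X n ω = v} = p v) (hsymm : ∀ s, p (-s) = p s) (v : Zd d) :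
    greenFn μ X (-v) = greenFn μ X v := by
  simp only [greenFn]
  exact congrArg _ (tsum_congr fun n => measure_walk_neg hmeas hindep hlaw hsymm n v)

lemma tsum_measure_walk_succ_mul (hmeas : ∀ n, Measurable (X n)) (hindep : iIndepFun X μ)
    (hlaw : ∀ n v, μ {ω | X n ω = v} = p v) (g : Zd d → ℝ≥0∞) (n : ℕ) :
    ∑' y, μ {ω | walk X (n + 1) ω = y} * g y
      = ∑' z, μ {ω | walk X n ω = z} * ∑' s, p s * g (z + s) := by
  simp_rw [measure_walk_succ hmeas hindep hlaw, ← ENNReal.tsum_mul_right, ← ENNReal.tsum_mul_left]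
  conv_lhs => rw [ENNReal.tsum_comm]
  conv_rhs => rw [ENNReal.tsum_comm]
  refine tsum_congr fun s => ?_
  rw [← (Equiv.addRight s).tsum_eq]
  refine tsum_congr fun z => ?_
  simp only [Equiv.coe_addRight, add_sub_cancel_right]
  ring

lemma mul_expectedVisits_le [IsProbabilityMeasure μ] (hmeas : ∀ n, Measurable (X n))
    (hindep : iIndepFun X μ) (hlaw : ∀ n v, μ {ω | X n ω = v} = p v) {g : Zd d → ℝ≥0∞}
    {c : ℝ≥0∞} {v : Zd d}
    (hg : ∀ y, ∑' s, p s * g (y + s) + (if y = v then c else 0) ≤ g y) :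
    c * expectedVisits μ X v ≤ g 0 := by
  set e : ℕ → ℝ≥0∞ := fun n => ∑' y, μ {ω | walk X n ω = y} * g y
  have he0 : e 0 = g 0 := by
    refine (tsum_eq_single 0 fun y hy => ?_).trans ?_
    · simp [walk_zero, Ne.symm hy]
    · simp [walk_zero]
  have hstep : ∀ n, e (n + 1) + c * μ {ω | walk X n ω = v} ≤ e n := fun n =>
    calc e (n + 1) + c * μ {ω | walk X n ω = v}
        = ∑' z, μ {ω | walk X n ω = z} * (∑' s, p s * g (z + s) + if z = v then c else 0) := by
          simp only [e, mul_add, mul_ite, mul_zero, ENNReal.tsum_add, tsum_ite_eq,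
            tsum_measure_walk_succ_mul hmeas hindep hlaw, mul_comm c]
      _ ≤ e n := ENNReal.tsum_le_tsum fun z => mul_le_mul_right (hg z) _
  have htel : ∀ N, ∑ n ∈ range N, c * μ {ω | walk X n ω = v} + e N ≤ e 0 := by
    intro N
    induction N with
    | zero => simp
    | succ N ih =>
      calc ∑ n ∈ range (N + 1), c * μ {ω | walk X n ω = v} + e (N + 1)
          = ∑ n ∈ range N, c * μ {ω | walk X n ω = v}
              + (e (N + 1) + c * μ {ω | walk X N ω = v}) := by rw [sum_range_succ]; ring
        _ ≤ e 0 := (add_le_add_right (hstep N) _).trans ih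
  rw [expectedVisits, ← ENNReal.tsum_mul_left, ← he0]
  exact ENNReal.tsum_le_of_sum_range_le fun N => le_self_add.trans (htel N)

end Walk

section Escape

variable {Ω : Type*} [MeasurableSpace Ω] {μ : Measure Ω} {d : ℕ} {X : ℕ → Ω → Zd d}
  {A A' B : Finset (Zd d)} {x : Zd d}

lemma escProb_nonneg : 0 ≤ escProb μ X A x := ENNReal.toReal_nonneg

lemma escProb_le_one [IsProbabilityMeasure μ] : escProb μ X A x ≤ 1 := measureReal_le_one

variable [IsFiniteMeasure μ]

lemma escProb_anti (h : A ⊆ A') : escProb μ X A' x ≤ escProb μ X A x :=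
  measureReal_mono fun _ hω n hn hA => hω n hn (h hA)

lemma escProb_sub_escProb_union_le_hitProb :
    escProb μ X A x - escProb μ X (A ∪ B) x ≤ hitProb μ X B x := by
  rw [sub_le_iff_le_add']
  refine (measureReal_mono fun ω hω => ?_).trans (measureReal_union_le _ _)
  by_cases hB : ∃ n, 1 ≤ n ∧ x + ∑ k ∈ range n, X k ω ∈ B
  · exact Or.inr hB
  · push Not at hB
    exact Or.inl fun n hn hAB => (mem_union.1 hAB).elim (hω n hn) (hB n hn)

end Escape

section Green

variable {Ω : Type*} [MeasurableSpace Ω] {μ : Measure Ω} {d : ℕ} {X : ℕ → Ω → Zd d}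

lemma greenFn_eq_toReal (v : Zd d) : greenFn μ X v = (expectedVisits μ X v).toReal := rfl

lemma greenFn_nonneg (v : Zd d) : 0 ≤ greenFn μ X v := ENNReal.toReal_nonneg

lemma measure_hit_le_sum_expectedVisits (B : Finset (Zd d)) (x : Zd d) :
    μ {ω | ∃ n, 1 ≤ n ∧ x + walk X n ω ∈ B} ≤ ∑ y ∈ B, expectedVisits μ X (y - x) :=
  calc μ {ω | ∃ n, 1 ≤ n ∧ x + walk X n ω ∈ B}
      ≤ μ (⋃ n, ⋃ y ∈ B, {ω | walk X n ω = y - x}) :=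
        measure_mono fun _ ⟨_, _, hn⟩ =>
          Set.mem_iUnion.2 ⟨_, Set.mem_iUnion₂.2 ⟨_, hn, (add_sub_cancel_left x _).symm⟩⟩
    _ ≤ ∑' n, ∑ y ∈ B, μ {ω | walk X n ω = y - x} :=
        (measure_iUnion_le _).trans (ENNReal.tsum_le_tsum fun _ => measure_biUnion_finset_le _ _)
    _ = ∑ y ∈ B, expectedVisits μ X (y - x) := Summable.tsum_finsetSum fun _ _ => ENNReal.summable

lemma hitProb_le_sum_greenFn (hfin : ∀ v, expectedVisits μ X v ≠ ⊤) (B : Finset (Zd d))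
    (x : Zd d) : hitProb μ X B x ≤ ∑ y ∈ B, greenFn μ X (y - x) := by
  simp only [greenFn_eq_toReal]
  rw [← ENNReal.toReal_sum fun y _ => hfin _]
  exact ENNReal.toReal_mono (ENNReal.sum_ne_top.2 fun y _ => hfin _)
    (measure_hit_le_sum_expectedVisits B x)

lemma one_le_greenFn_zero [IsProbabilityMeasure μ] (hfin : expectedVisits μ X 0 ≠ ⊤) :
    1 ≤ greenFn μ X 0 := by
  have h0 : μ {ω | walk X 0 ω = 0} = 1 := by simp [walk_zero]
  simpa [greenFn_eq_toReal] using
    ENNReal.toReal_mono hfin (h0 ▸ ENNReal.le_tsum 0 : 1 ≤ expectedVisits μ X 0)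

end Green

section SimpleRandomWalk

variable {d : ℕ}

def unitStep (p : Fin d × Bool) : Zd d :=
  fun j => if j = p.1 then (if p.2 then 1 else -1) else 0

lemma stepSetD_eq_image : stepSetD d = univ.image unitStep := rfl

lemma unitStep_injective : Function.Injective (unitStep (d := d)) := by
  rintro ⟨j, b⟩ ⟨j', b'⟩ h
  have hj := congrFun h j
  by_cases hjj : j = j'
  · subst hjj
    cases b <;> cases b' <;> simp_all [unitStep]
  · cases b <;> simp [unitStep, hjj] at hj

lemma neg_unitStep (j : Fin d) (b : Bool) : -unitStep (j, b) = unitStep (j, !b) := by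
  funext i
  by_cases hi : i = j <;> cases b <;> simp [unitStep, hi]

lemma neg_mem_stepSetD {s : Zd d} (hs : s ∈ stepSetD d) : -s ∈ stepSetD d := by
  rw [stepSetD_eq_image] at hs ⊢
  obtain ⟨⟨j, b⟩, -, rfl⟩ := mem_image.1 hs
  rw [neg_unitStep]
  exact mem_image_of_mem _ (mem_univ _)

def srwLaw (d : ℕ) (v : Zd d) : ℝ≥0∞ := if v ∈ stepSetD d then (2 * d : ℝ≥0∞)⁻¹ else 0

lemma srwLaw_neg (v : Zd d) : srwLaw d (-v) = srwLaw d v := by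
  have : -v ∈ stepSetD d ↔ v ∈ stepSetD d :=
    ⟨fun h => neg_neg v ▸ neg_mem_stepSetD h, neg_mem_stepSetD⟩
  simp only [srwLaw, this]

def sqNorm (x : Zd d) : ℝ := ∑ j, (x j : ℝ) ^ 2

lemma sqNorm_zero : sqNorm (0 : Zd d) = 0 := by simp [sqNorm]

lemma sqNorm_nonneg (x : Zd d) : 0 ≤ sqNorm x := sum_nonneg fun _ _ => sq_nonneg _

lemma sq_le_sqNorm (x : Zd d) (j : Fin d) : (x j : ℝ) ^ 2 ≤ sqNorm x :=
  single_le_sum (f := fun j => (x j : ℝ) ^ 2) (fun _ _ => sq_nonneg _) (mem_univ j)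

lemma sqNorm_add_unitStep (x : Zd d) (j : Fin d) (b : Bool) :
    sqNorm (x + unitStep (j, b)) = sqNorm x + 2 * (if b then (1 : ℝ) else -1) * x j + 1 := by
  have hterm : ∀ i, ((x + unitStep (j, b)) i : ℝ) ^ 2
      = (x i : ℝ) ^ 2 + if i = j then 2 * (if b then (1 : ℝ) else -1) * x j + 1 else 0 := by
    intro i
    by_cases hi : i = j
    · subst hi; cases b <;> simp [unitStep] <;> ring
    · simp [unitStep, hi]
  simp only [sqNorm, hterm, sum_add_distrib, sum_ite_eq', mem_univ, if_true]
  ring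

lemma sum_stepSetD (f : Zd d → ℝ) :
    ∑ s ∈ stepSetD d, f s = ∑ j, (f (unitStep (j, true)) + f (unitStep (j, false))) := by
  rw [stepSetD_eq_image, sum_image fun p _ q _ h => unitStep_injective h, Fintype.sum_prod_type]
  simp only [Fintype.sum_bool]

/- With `a = u + 2` and `b = 2 t` the left side is `2 a / (a² - b²)`, and `a² - b² ≥ u² + 4`
because `t² ≤ u`. -/
lemma inv_add_inv_le {u t : ℝ} (hu : 0 ≤ u) (ht : t ^ 2 ≤ u) :
    (u + 2 * t + 2)⁻¹ + (u - 2 * t + 2)⁻¹ ≤ 2 / (u + 2) + 8 * t ^ 2 / ((u + 2) * (u ^ 2 + 4)) := by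
  have h1 : 0 < u + 2 * t + 2 := by nlinarith [sq_nonneg (t + 1)]
  have h2 : 0 < u - 2 * t + 2 := by nlinarith [sq_nonneg (t - 1)]
  have h3 : (0 : ℝ) < u ^ 2 + 4 := by positivity
  rw [inv_eq_one_div, inv_eq_one_div, div_add_div _ _ h1.ne' h2.ne',
    div_add_div _ _ (by positivity) (by positivity),
    div_le_div_iff₀ (by positivity) (by positivity)]
  nlinarith [mul_nonneg (mul_nonneg (sq_nonneg t) (sub_nonneg.2 ht)) h3.le,
    mul_nonneg (mul_nonneg (sq_nonneg t) (sub_nonneg.2 ht)) (by linarith : (0 : ℝ) ≤ u + 2),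
    mul_nonneg (sq_nonneg t) (sub_nonneg.2 ht), sq_nonneg t]

lemma sum_inv_sqNorm_add_le (hd : 5 ≤ d) (x : Zd d) :
    ∑ s ∈ stepSetD d, (sqNorm (x + s) + 1)⁻¹ ≤ 2 * d / (sqNorm x + 1) := by
  set u := sqNorm x
  have hu : 0 ≤ u := sqNorm_nonneg x
  have hd' : (5 : ℝ) ≤ d := by exact_mod_cast hd
  calc ∑ s ∈ stepSetD d, (sqNorm (x + s) + 1)⁻¹
      = ∑ j, ((u + 2 * x j + 2)⁻¹ + (u - 2 * x j + 2)⁻¹) := by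
        rw [sum_stepSetD]
        refine sum_congr rfl fun j _ => ?_
        simp only [sqNorm_add_unitStep, if_true, Bool.false_eq_true, if_false, u]
        ring_nf
    _ ≤ ∑ j, (2 / (u + 2) + 8 * (x j : ℝ) ^ 2 / ((u + 2) * (u ^ 2 + 4))) :=
        sum_le_sum fun j _ => inv_add_inv_le hu (sq_le_sqNorm x j)
    _ = 2 * d / (u + 2) + 8 * u / ((u + 2) * (u ^ 2 + 4)) := by
        rw [sum_add_distrib, ← sum_div, ← sum_div, ← mul_sum]
        simp only [sum_const, card_univ, Fintype.card_fin, nsmul_eq_mul, mul_comm (d : ℝ), u,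
          sqNorm]
    -- equivalent to `4 u (u + 1) ≤ d (u² + 4)`: this is where `d ≥ 5` is needed
    _ ≤ 2 * d / (u + 1) := by
        rw [div_add_div _ _ (by positivity) (by positivity), div_le_div_iff₀ (by positivity)
          (by positivity)]
        nlinarith [sq_nonneg (u - 2), mul_nonneg hu (sq_nonneg (u - 2)), mul_nonneg hu hu,
          mul_nonneg (mul_nonneg hu hu) hu, mul_nonneg (sub_nonneg.2 hd') (sq_nonneg u),
          mul_nonneg (mul_nonneg (sub_nonneg.2 hd') (sq_nonneg u)) hu,
          mul_nonneg (sub_nonneg.2 hd') hu]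

lemma sum_inv_sqNorm_unitStep : ∑ s ∈ stepSetD d, (sqNorm s + 1)⁻¹ = d := by
  have h : ∀ j b, sqNorm (unitStep (d := d) (j, b)) = 1 := fun j b => by
    simpa [sqNorm] using sqNorm_add_unitStep 0 j b
  rw [sum_stepSetD]
  simp only [h]
  norm_num [sum_const]

lemma inv_sqNorm_add_one_superharmonic (hd : 5 ≤ d) (x : Zd d) :
    (2 * d : ℝ)⁻¹ * ∑ s ∈ stepSetD d, (sqNorm (x + s) + 1)⁻¹ + (if x = 0 then 2⁻¹ else 0)
      ≤ (sqNorm x + 1)⁻¹ := by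
  have hd' : (0 : ℝ) < d := by exact_mod_cast (by omega : 0 < d)
  have hx : 0 < sqNorm x + 1 := by linarith [sqNorm_nonneg x]
  split_ifs with h
  · subst h
    simp only [zero_add, sum_inv_sqNorm_unitStep, sqNorm_zero]
    field_simp
    norm_num
  · calc (2 * d : ℝ)⁻¹ * ∑ s ∈ stepSetD d, (sqNorm (x + s) + 1)⁻¹ + 0
        ≤ (2 * d : ℝ)⁻¹ * (2 * d / (sqNorm x + 1)) := by
          rw [add_zero]
          exact mul_le_mul_of_nonneg_left (sum_inv_sqNorm_add_le hd x) (by positivity)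
      _ = (sqNorm x + 1)⁻¹ := by field_simp

end SimpleRandomWalk

section Transience

variable {Ω : Type*} [MeasurableSpace Ω] {μ : Measure Ω} {d : ℕ} {X : ℕ → Ω → Zd d}

lemma tsum_srwLaw_mul_inv_sqNorm_le (hd : 5 ≤ d) (v y : Zd d) :
    ∑' s, srwLaw d s * ENNReal.ofReal (sqNorm (y + s - v) + 1)⁻¹ + (if y = v then 2⁻¹ else 0)
      ≤ ENNReal.ofReal (sqNorm (y - v) + 1)⁻¹ := by
  have hpos : ∀ x : Zd d, 0 ≤ (sqNorm x + 1)⁻¹ := fun x => by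
    have := sqNorm_nonneg x; positivity
  have hd' : (0 : ℝ) < 2 * d := by
    have : (0 : ℝ) < d := by exact_mod_cast (by omega : 0 < d)
    positivity
  rw [tsum_eq_sum (s := stepSetD d) fun s hs => by simp [srwLaw, hs]]
  calc ∑ s ∈ stepSetD d, srwLaw d s * ENNReal.ofReal (sqNorm (y + s - v) + 1)⁻¹
        + (if y = v then 2⁻¹ else 0)
      = ENNReal.ofReal ((2 * d : ℝ)⁻¹ * ∑ s ∈ stepSetD d, (sqNorm (y - v + s) + 1)⁻¹
          + (if y - v = 0 then 2⁻¹ else 0)) := by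
        rw [ENNReal.ofReal_add (mul_nonneg (inv_nonneg.2 hd'.le) (sum_nonneg fun _ _ => hpos _))
            (by split_ifs <;> norm_num),
          ENNReal.ofReal_mul (by positivity), ENNReal.ofReal_sum_of_nonneg fun _ _ => hpos _,
          mul_sum]
        congr 1
        · refine sum_congr rfl fun s hs => ?_
          rw [srwLaw, if_pos hs, ENNReal.ofReal_inv_of_pos hd', sub_add_eq_add_sub]
          norm_cast
        · simp only [sub_eq_zero]
          split_ifs <;> simp
    _ ≤ ENNReal.ofReal (sqNorm (y - v) + 1)⁻¹ :=
        ENNReal.ofReal_le_ofReal (inv_sqNorm_add_one_superharmonic hd (y - v))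

lemma expectedVisits_le_two [IsProbabilityMeasure μ] (hd : 5 ≤ d)
    (hmeas : ∀ n, Measurable (X n)) (hindep : iIndepFun X μ)
    (hlaw : ∀ n v, μ {ω | X n ω = v} = srwLaw d v) (v : Zd d) :
    expectedVisits μ X v ≤ 2 := by
  have h := mul_expectedVisits_le hmeas hindep hlaw (c := 2⁻¹) (v := v)
    (g := fun y => ENNReal.ofReal (sqNorm (y - v) + 1)⁻¹) fun y => by
      simpa only [add_sub_right_comm] using tsum_srwLaw_mul_inv_sqNorm_le hd v y
  rw [ENNReal.inv_mul_le_iff (by norm_num) (by norm_num)] at h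
  refine h.trans (mul_le_of_le_one_right' (ENNReal.ofReal_le_one.2 (inv_le_one_of_one_le₀ ?_)))
  linarith [sqNorm_nonneg (0 - v)]

end Transience

section CrossTerm

variable {Ω : Type*} [MeasurableSpace Ω] {μ : Measure Ω} {X : ℕ → Ω → Zd 5}

def eqPotential (μ : Measure Ω) (X : ℕ → Ω → Zd 5) (C : Finset (Zd 5)) (w : Zd 5) : ℝ :=
  ∑ z ∈ C, greenFn μ X (w - z) * escProb μ X C z

lemma crossTerm_eq_sum_mul_eqPotential (A C : Finset (Zd 5)) :
    crossTerm μ X A C = ∑ x ∈ A, escProb μ X A x * eqPotential μ X C x := by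
  simp only [crossTerm, eqPotential, mul_sum, mul_assoc]

lemma eqPotential_nonneg (C : Finset (Zd 5)) (w : Zd 5) : 0 ≤ eqPotential μ X C w :=
  sum_nonneg fun _ _ => mul_nonneg (greenFn_nonneg _) escProb_nonneg

lemma eqPotential_le_sum_greenFn [IsProbabilityMeasure μ] (C : Finset (Zd 5)) (w : Zd 5) :
    eqPotential μ X C w ≤ ∑ z ∈ C, greenFn μ X (w - z) :=
  sum_le_sum fun _ _ => mul_le_of_le_one_right (greenFn_nonneg _) escProb_le_one

lemma crossTerm_add_sub_union_eq (A B C : Finset (Zd 5)) :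
    crossTerm μ X A C + crossTerm μ X B C - crossTerm μ X (A ∪ B) C
      = ∑ x ∈ A, (escProb μ X A x - escProb μ X (A ∪ B) x) * eqPotential μ X C x
        + ∑ y ∈ B, (escProb μ X B y - if y ∈ A then 0 else escProb μ X (A ∪ B) y)
            * eqPotential μ X C y := by
  have hunion : ∀ f : Zd 5 → ℝ,
      ∑ w ∈ A ∪ B, f w = ∑ w ∈ A, f w + ∑ w ∈ B, if w ∈ A then 0 else f w := by
    intro f
    rw [← union_sdiff_self_eq_union, sum_union disjoint_sdiff, sdiff_eq_filter, sum_filter]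
    simp only [ite_not]
  simp only [crossTerm_eq_sum_mul_eqPotential, hunion, sub_mul, sum_sub_distrib, ite_mul, zero_mul]
  ring

variable [IsProbabilityMeasure μ]

lemma crossTerm_add_sub_union_nonneg (A B C : Finset (Zd 5)) :
    0 ≤ crossTerm μ X A C + crossTerm μ X B C - crossTerm μ X (A ∪ B) C := by
  rw [crossTerm_add_sub_union_eq]
  refine add_nonneg (sum_nonneg fun x _ => mul_nonneg ?_ (eqPotential_nonneg C x))
    (sum_nonneg fun y _ => mul_nonneg ?_ (eqPotential_nonneg C y))
  · exact sub_nonneg.2 (escProb_anti subset_union_left)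
  · split_ifs
    · exact sub_nonneg.2 escProb_nonneg
    · exact sub_nonneg.2 (escProb_anti subset_union_right)

lemma escProb_sub_ite_le {A B : Finset (Zd 5)} {y : Zd 5}
    (hhit : hitProb μ X A y ≤ ∑ x ∈ A, greenFn μ X (x - y)) (hG0 : 1 ≤ greenFn μ X 0) :
    escProb μ X B y - (if y ∈ A then 0 else escProb μ X (A ∪ B) y)
      ≤ ∑ x ∈ A, greenFn μ X (x - y) := by
  split_ifs with hyA
  · calc escProb μ X B y - 0 ≤ greenFn μ X (y - y) := by
          rw [sub_zero, sub_self]; exact escProb_le_one.trans hG0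
      _ ≤ ∑ x ∈ A, greenFn μ X (x - y) :=
          single_le_sum (f := fun x => greenFn μ X (x - y)) (fun _ _ => greenFn_nonneg _) hyA
  · rw [union_comm]
    exact escProb_sub_escProb_union_le_hitProb.trans hhit

lemma crossTerm_add_sub_union_le
    (hhit : ∀ (B : Finset (Zd 5)) x, hitProb μ X B x ≤ ∑ y ∈ B, greenFn μ X (y - x))
    (hsymm : ∀ v, greenFn μ X (-v) = greenFn μ X v)
    (hG0 : 1 ≤ greenFn μ X 0) (A B C : Finset (Zd 5)) :
    crossTerm μ X A C + crossTerm μ X B C - crossTerm μ X (A ∪ B) C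
      ≤ ∑ x ∈ A, ∑ y ∈ B, ∑ z ∈ C, greenFn μ X (x - y) * greenFn μ X (y - z)
        + ∑ x ∈ A, ∑ y ∈ B, ∑ z ∈ C, greenFn μ X (x - y) * greenFn μ X (x - z) := by
  have hhit' : ∀ (B : Finset (Zd 5)) x, hitProb μ X B x ≤ ∑ y ∈ B, greenFn μ X (x - y) :=
    fun B x => (hhit B x).trans_eq (sum_congr rfl fun y _ => by rw [← neg_sub, hsymm])
  rw [crossTerm_add_sub_union_eq, add_comm]
  gcongr ?_ + ?_
  · calc _ ≤ ∑ y ∈ B, (∑ x ∈ A, greenFn μ X (x - y)) * ∑ z ∈ C, greenFn μ X (y - z) :=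
          sum_le_sum fun y _ => mul_le_mul (escProb_sub_ite_le (hhit A y) hG0)
            (eqPotential_le_sum_greenFn C y) (eqPotential_nonneg C y)
            (sum_nonneg fun _ _ => greenFn_nonneg _)
      _ = _ := by simp only [sum_mul_sum]; exact sum_comm
  · calc _ ≤ ∑ x ∈ A, (∑ y ∈ B, greenFn μ X (x - y)) * ∑ z ∈ C, greenFn μ X (x - z) :=
          sum_le_sum fun x _ => mul_le_mul
            (escProb_sub_escProb_union_le_hitProb.trans (hhit' B x))
            (eqPotential_le_sum_greenFn C x) (eqPotential_nonneg C x)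
            (sum_nonneg fun _ _ => greenFn_nonneg _)
      _ = _ := by simp only [sum_mul_sum]

end CrossTerm

theorem stmt7
    {Ω : Type*} [MeasurableSpace Ω] (μ : Measure Ω) [IsProbabilityMeasure μ]
    (X : ℕ → Ω → Zd 5) (hmeas : ∀ n, Measurable (X n))
    (hindep : iIndepFun X μ)
    (hdist : ∀ n v, μ {ω | X n ω = v} = if v ∈ stepSetD 5 then (10 : ℝ≥0∞)⁻¹ else 0) :
    (∀ A B C' : Finset (Zd 5),
        0 ≤ crossTerm μ X A C' + crossTerm μ X B C' - crossTerm μ X (A ∪ B) C') ∧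
      ∃ C₀ > (0:ℝ), ∀ A B C' : Finset (Zd 5),
        crossTerm μ X A C' + crossTerm μ X B C' - crossTerm μ X (A ∪ B) C'
          ≤ C₀ * ((∑ x ∈ A, ∑ y ∈ B, ∑ z ∈ C',
                      greenFn μ X (x - y) * greenFn μ X (y - z))
                + (∑ x ∈ A, ∑ y ∈ B, ∑ z ∈ C',
                      greenFn μ X (x - y) * greenFn μ X (x - z))) := by
  have hlaw : ∀ n v, μ {ω | X n ω = v} = srwLaw 5 v := fun n v => by
    rw [hdist, srwLaw]
    norm_num
  have hfin : ∀ v, expectedVisits μ X v ≠ ⊤ := fun v =>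
    ((expectedVisits_le_two le_rfl hmeas hindep hlaw v).trans_lt (by norm_num)).ne
  refine ⟨crossTerm_add_sub_union_nonneg, 1, one_pos, fun A B C => ?_⟩
  rw [one_mul]
  exact crossTerm_add_sub_union_le (hitProb_le_sum_greenFn hfin)
    (greenFn_neg hmeas hindep hlaw srwLaw_neg) (one_le_greenFn_zero (hfin 0)) A B C
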